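/- arXiv:2105.11520 — 3 statements merged into one kernel-verified Lean document; each statement's English description precedes it below -/
import Mathlib

section
/- For Young diagrams (partitions) D and E of n, the intertwining number ⟨Ind_{S_E}^{S_n}(sgn), Ind_{S_D}^{S_n}(1)⟩ is zero unless E is dominated by the transpose (conjugate) partition Dᵗ in the dominance order. -/
noncomputable section

open CategoryTheory Equiv

namespace PieriGL

/-- Partial sums of the row lengths of a Young diagram (parts padded with zeros). -/
def psum (D : YoungDiagram) (s : ℕ) : ℕ := ∑ j ∈ Finset.range s, D.rowLen j

/-- The dominance order on Young diagrams: `domLE D E` means `D ⪯ E`, i.e. for all `i`,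
`d_1 + ... + d_i ≤ e_1 + ... + e_i`. -/
def domLE (D E : YoungDiagram) : Prop := ∀ i, psum D i ≤ psum E i

/-- `E - D` is a horizontal strip: `D ⊆ E` and each column of `E` is at most one box longer
than the corresponding column of `D`. -/
def IsHorizontalStrip (D E : YoungDiagram) : Prop :=
  D ≤ E ∧ ∀ j, E.colLen j ≤ D.colLen j + 1

/-- The index of the block (row of the Young diagram) in which `i` lies, for the partition of
`{0, 1, 2, ...}` into consecutive blocks of sizes the rows of `D`. -/
def blk (D : YoungDiagram) (i : ℕ) : ℕ :=
  ((Finset.range (i + 1)).filter fun s => psum D (s + 1) ≤ i).card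

/-- The Young subgroup `S_D ≅ S_{d_1} × ... × S_{d_r} ⊆ S_n` attached to a Young diagram `D`:
the permutations preserving each consecutive block of sizes `d_1, ..., d_r`. -/
def youngSubgroup (n : ℕ) (D : YoungDiagram) : Subgroup (Equiv.Perm (Fin n)) where
  carrier := {σ | ∀ i : Fin n, blk D (σ i) = blk D i}
  one_mem' := by intro i; rfl
  mul_mem' := by
    intro a b ha hb i
    have := ha (b i)
    simp only [Equiv.Perm.mul_apply]
    rw [this, hb i]
  inv_mem' := by
    intro a ha i
    have := ha (a⁻¹ i)
    simpa using this.symm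

/-- The Young module `Y_D = Ind_{S_D}^{S_n}(1)`: the complex permutation representation of
`S_n` on the cosets `S_n / S_D`. -/
def youngModule (n : ℕ) (D : YoungDiagram) : Rep ℂ (Equiv.Perm (Fin n)) :=
  Rep.ofMulAction ℂ (Equiv.Perm (Fin n)) (Equiv.Perm (Fin n) ⧸ youngSubgroup n D)

/-- The intertwining number `⟨π, τ⟩ = dim Hom_G(π, τ)`. -/
def interNum {G : Type} [Monoid G] (π τ : Rep ℂ G) : ℕ :=
  Module.finrank ℂ (π ⟶ τ)

section Induced

variable {G : Type} [Group G] (H : Subgroup G) {W : Type} [AddCommGroup W] [Module ℂ W]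

/-- The space of the induced representation `Ind_H^G(ρ)`: functions `f : G → W` with
`f(hg) = ρ(h) f(g)`. -/
def indSpace (ρ : Representation ℂ H W) : Submodule ℂ (G → W) where
  carrier := {f | ∀ (h : H) (g : G), f (↑h * g) = ρ h (f g)}
  add_mem' := by intro a b ha hb h g; simp [ha h g, hb h g]
  zero_mem' := by intro h g; simp
  smul_mem' := by intro c a ha h g; simp [ha h g]

/-- The induced representation `Ind_H^G(ρ)`, with `G` acting by right translation on
equivariant functions `G → W`. -/
def indRep (ρ : Representation ℂ H W) : Rep ℂ G :=
  Rep.of (X := indSpace H ρ)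
    { toFun := fun g =>
        { toFun := fun f => ⟨fun x => f.1 (x * g), fun h x => by
            have := f.2 h (x * g); simpa [mul_assoc] using this⟩
          map_add' := by intro a b; apply Subtype.ext; funext x; rfl
          map_smul' := by intro c a; apply Subtype.ext; funext x; rfl }
      map_one' := by
        apply LinearMap.ext; intro f; apply Subtype.ext; funext x; simp
      map_mul' := by
        intro g₁ g₂
        apply LinearMap.ext; intro f; apply Subtype.ext; funext x
        simp [mul_assoc] }

end Induced

/-- The sign character of a subgroup of `S_n`, as a one-dimensional representation on `ℂ`. -/
def sgnRep {n : ℕ} (H : Subgroup (Equiv.Perm (Fin n))) : Representation ℂ H ℂ where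
  toFun h := algebraMap ℂ (ℂ →ₗ[ℂ] ℂ) ((Equiv.Perm.sign (h : Equiv.Perm (Fin n)) : ℤ) : ℂ)
  map_one' := by simp
  map_mul' := by
    intro a b
    show algebraMap ℂ (ℂ →ₗ[ℂ] ℂ) _ = algebraMap ℂ (ℂ →ₗ[ℂ] ℂ) _ * algebraMap ℂ (ℂ →ₗ[ℂ] ℂ) _
    rw [← map_mul]
    norm_cast
    rw [Subgroup.coe_mul, map_mul]

/-- `Ind_{S_E}^{S_n}(sgn)`, the representation of `S_n` induced from the sign character of the
Young subgroup `S_E`. -/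
def sgnInduced (n : ℕ) (E : YoungDiagram) : Rep ℂ (Equiv.Perm (Fin n)) :=
  indRep (youngSubgroup n E) (sgnRep (youngSubgroup n E))

/-!
If `E ⋠ Dᵗ`, fix `s` with `e_1 + ... + e_s > (Dᵗ)_1 + ... + (Dᵗ)_s`. For any permutation `w`, the
indices in the first `s` blocks of `E` cannot be sent by `w` into the blocks of `D` with at most one
index of each `E`-block per `D`-block, since block `j` of `D` would then receive at most
`min(s, d_j)` of them, and `∑_j min(s, d_j) = (Dᵗ)_1 + ... + (Dᵗ)_s`. So for every `g ∈ S_n` there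
is a transposition `τ ∈ S_E` with `g⁻¹ τ g ∈ S_D`.

An intertwiner `T : Ind_{S_E}^{S_n}(sgn) → ℂ[S_n / S_D]` is determined by its values on the
functions `δ_g` supported on the cosets `S_E g`. Taking `τ` as above for `g k`, the element
`g⁻¹ τ g` negates `T δ_g` (as `sgn τ = -1`) and fixes the coset `k S_D`, so the coefficient of
`T δ_g` at `k S_D` vanishes. Hence `T = 0`.
-/

open Finset

section Blocks

variable (D : YoungDiagram)

lemma psum_mono : Monotone (psum D) := fun _ _ h =>
  sum_le_sum_of_subset (range_subset_range.2 h)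

lemma psum_succ (s : ℕ) : psum D (s + 1) = psum D s + D.rowLen s := sum_range_succ _ _

lemma psum_eq_card {m : ℕ} (hm : D.colLen 0 ≤ m) : psum D m = D.card := by
  have hrow : ∀ c ∈ D.cells, c.1 ∈ range m := fun c hc => mem_range.2 <|
    (YoungDiagram.mem_iff_lt_colLen.1 (D.up_left_mem le_rfl (Nat.zero_le c.2) hc)).trans_le hm
  rw [YoungDiagram.card, card_eq_sum_card_fiberwise hrow]
  exact sum_congr rfl fun i _ => by rw [D.rowLen_eq_card]; rfl

lemma colLen_zero_le_card : D.colLen 0 ≤ D.card := by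
  simpa using card_le_card_of_injOn (fun i => (i, 0)) (s := range (D.colLen 0)) (t := D.cells)
    (fun i hi => YoungDiagram.mem_iff_lt_colLen.2 (mem_range.1 hi))
    (fun _ _ _ _ h => (Prod.ext_iff.1 h).1)

lemma psum_le_card (s : ℕ) : psum D s ≤ D.card := by
  rcases le_total s (D.colLen 0) with h | h
  · exact (psum_mono D h).trans (psum_eq_card D le_rfl).le
  · exact (psum_eq_card D h).le

lemma succ_le_psum {t : ℕ} (h : psum D (t + 1) < D.card) : t + 1 ≤ psum D (t + 1) := by
  have hcol : t + 1 ≤ D.colLen 0 := by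
    by_contra hc
    exact h.ne (psum_eq_card D (by omega))
  calc t + 1 = ∑ _j ∈ range (t + 1), 1 := by simp
    _ ≤ psum D (t + 1) := sum_le_sum fun j hj => YoungDiagram.mem_iff_lt_rowLen.1 <|
        YoungDiagram.mem_iff_lt_colLen.2 ((mem_range.1 hj).trans_le hcol)

-- Past `D.card` every block is empty and `blk D i = i + 1`, hence the bound on `i`.
lemma le_blk_iff {i : ℕ} (hi : i < D.card) {s : ℕ} : s ≤ blk D i ↔ psum D s ≤ i := by
  constructor
  · intro hs
    by_contra! hps
    have hs0 : s ≠ 0 := by rintro rfl; simp [psum] at hps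
    have hsub : (range (i + 1)).filter (fun t => psum D (t + 1) ≤ i) ⊆ range (s - 1) := by
      intro t ht
      have ht' : psum D (t + 1) < psum D s := (mem_filter.1 ht).2.trans_lt hps
      have : t + 1 < s := by
        by_contra! hc
        exact ht'.not_ge (psum_mono D hc)
      exact mem_range.2 (by omega)
    have hblk : blk D i ≤ s - 1 := by simpa [blk] using card_le_card hsub
    omega
  · intro hps
    have hsub : range s ⊆ (range (i + 1)).filter (fun t => psum D (t + 1) ≤ i) := by
      intro t ht
      have ht' : psum D (t + 1) ≤ i := (psum_mono D (mem_range.1 ht)).trans hps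
      have := succ_le_psum D (ht'.trans_lt hi)
      exact mem_filter.2 ⟨mem_range.2 (by omega), ht'⟩
    simpa [blk] using card_le_card hsub

lemma blk_lt_iff {i : ℕ} (hi : i < D.card) {s : ℕ} : blk D i < s ↔ i < psum D s := by
  rw [← not_le, ← not_le, le_blk_iff D hi]

variable {D} {n : ℕ}

lemma card_blk_lt (hD : D.card = n) (s : ℕ) : #{x : Fin n | blk D x < s} = psum D s := by
  have hfilter : univ.filter (fun x : Fin n => blk D x < s) =
      univ.filter fun x : Fin n => (x : ℕ) < psum D s :=
    filter_congr fun x _ => blk_lt_iff D (hD ▸ x.isLt)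
  rw [hfilter, Fin.card_filter_val_lt, min_eq_right (hD ▸ psum_le_card D s)]

lemma card_blk_eq (hD : D.card = n) (j : ℕ) : #{x : Fin n | blk D x = j} = D.rowLen j := by
  have hsplit : #{x : Fin n | blk D x < j + 1} =
      #{x : Fin n | blk D x < j} + #{x : Fin n | blk D x = j} := by
    rw [← card_union_of_disjoint (disjoint_filter.2 fun x _ h => h.ne), ← filter_or]
    congr 1
    exact filter_congr fun x _ => Nat.lt_succ_iff_lt_or_eq
  rw [card_blk_lt hD, card_blk_lt hD, psum_succ] at hsplit
  omega

lemma blk_lt (hD : D.card = n) (x : Fin n) : blk D x < n := by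
  rw [blk_lt_iff D (hD ▸ x.isLt), psum_eq_card D (hD ▸ colLen_zero_le_card D)]
  exact hD ▸ x.isLt

variable (D)

lemma sum_min_rowLen_le (m s : ℕ) :
    ∑ j ∈ range m, min s (D.rowLen j) ≤ psum D.transpose s := by
  have hrow : ∀ j, min s (D.rowLen j) = #{k ∈ range s | (j, k) ∈ D} := fun j => by
    rw [← card_range (min s _)]
    congr 1
    ext k
    simp [YoungDiagram.mem_iff_lt_rowLen]
  have hcol : ∀ k, #{j ∈ range m | (j, k) ∈ D} ≤ D.colLen k := fun k =>
    (card_le_card fun j hj => by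
      simp only [mem_filter, mem_range, YoungDiagram.mem_iff_lt_colLen] at hj ⊢
      exact hj.2).trans (card_range _).le
  calc ∑ j ∈ range m, min s (D.rowLen j)
      = ∑ j ∈ range m, ∑ k ∈ range s, if (j, k) ∈ D then 1 else 0 := by
        simp only [hrow, card_filter]
    _ = ∑ k ∈ range s, ∑ j ∈ range m, if (j, k) ∈ D then 1 else 0 := sum_comm
    _ ≤ ∑ k ∈ range s, D.colLen k := sum_le_sum fun k _ => by rw [← card_filter]; exact hcol k
    _ = psum D.transpose s := by simp [psum, YoungDiagram.rowLen_transpose]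

end Blocks

lemma domLE_transpose_of_injective {n : ℕ} {D E : YoungDiagram} (hD : D.card = n)
    (hE : E.card = n) (w : Perm (Fin n))
    (hw : Function.Injective fun i : Fin n => (blk E i, blk D (w i))) : domLE E D.transpose := by
  intro s
  set A : Finset (Fin n) := {i | blk E i < s}
  have hfiber : ∀ j ∈ range n, #(A.filter fun i => blk D (w i) = j) ≤ min s (D.rowLen j) := by
    intro j _
    refine le_min ?_ ?_
    · have hinj : Set.InjOn (fun i : Fin n => blk E i) (A.filter fun i => blk D (w i) = j) := by
        intro a ha b hb hab
        simp only [mem_coe, mem_filter] at ha hb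
        exact hw (Prod.ext hab (ha.2.trans hb.2.symm))
      simpa using card_le_card_of_injOn _ (t := range s)
        (fun i hi => mem_range.2 (mem_filter.1 (mem_filter.1 hi).1).2) hinj
    · calc #(A.filter fun i => blk D (w i) = j) ≤ #{x : Fin n | blk D x = j} :=
            card_le_card_of_injOn w (fun i hi => by simpa using (mem_filter.1 hi).2)
              w.injective.injOn
        _ = D.rowLen j := card_blk_eq hD j
  calc psum E s = #A := (card_blk_lt hE s).symm
    _ = ∑ j ∈ range n, #(A.filter fun i => blk D (w i) = j) :=
        card_eq_sum_card_fiberwise fun i _ => mem_range.2 (blk_lt hD (w i))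
    _ ≤ ∑ j ∈ range n, min s (D.rowLen j) := sum_le_sum hfiber
    _ ≤ psum D.transpose s := sum_min_rowLen_le D n s

lemma _root_.Representation.coeff_eq_zero_of_ofMulAction_eq_neg {k G X : Type*} [Ring k]
    [IsAddTorsionFree k] [Group G] [MulAction G X] {x : G} {v : MonoidAlgebra k X}
    (hv : Representation.ofMulAction k G X x v = -v) {q : X} (hq : x • q = q) :
    v.coeff q = 0 := by
  have h := congrArg (fun u => u.coeff q) hv
  simp only [Representation.coeff_ofMulAction, MonoidAlgebra.coeff_neg, Finsupp.neg_apply] at h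
  rwa [inv_smul_eq_iff.mpr hq.symm, self_eq_neg] at h

section IndDelta

variable {G : Type} [Group G] (H : Subgroup G) {W : Type} [AddCommGroup W] [Module ℂ W]
  (ρ : Representation ℂ H W)

open scoped Classical in
def indDelta (g : G) (w : W) : indRep H ρ :=
  ⟨fun x => if hx : x * g⁻¹ ∈ H then ρ ⟨_, hx⟩ w else 0, by
    intro h x
    have hmem : ↑h * x * g⁻¹ ∈ H ↔ x * g⁻¹ ∈ H := by rw [mul_assoc]; exact mul_mem_cancel_left h.2
    by_cases hx : x * g⁻¹ ∈ H
    · simp only [dif_pos hx, dif_pos (hmem.2 hx), ← Module.End.mul_apply, ← map_mul]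
      congr 2
      exact Subtype.ext (mul_assoc _ _ _)
    · simp only [dif_neg hx, dif_neg (mt hmem.1 hx), map_zero]⟩

variable {H ρ}

@[ext]
lemma indRep_ext {f f' : indRep H ρ} (h : ∀ x, f.1 x = f'.1 x) : f = f' :=
  Subtype.ext (funext h)

lemma indDelta_apply_of_mem {g x : G} (w : W) (hx : x * g⁻¹ ∈ H) :
    (indDelta H ρ g w).1 x = ρ ⟨_, hx⟩ w := by
  simp [indDelta, hx]

lemma indDelta_apply_of_notMem {g x : G} (w : W) (hx : x * g⁻¹ ∉ H) :
    (indDelta H ρ g w).1 x = 0 := by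
  simp [indDelta, hx]

lemma indDelta_neg (g : G) (w : W) : indDelta H ρ g (-w) = -indDelta H ρ g w := by
  ext x
  show _ = -(indDelta H ρ g w).1 x
  by_cases hx : x * g⁻¹ ∈ H
  · simp [indDelta_apply_of_mem _ hx]
  · simp [indDelta_apply_of_notMem _ hx]

lemma indDelta_inv_mul (h : H) (g : G) (w : W) :
    indDelta H ρ (h⁻¹ * g) w = indDelta H ρ g (ρ h w) := by
  ext x
  have hxg : x * (↑h⁻¹ * g)⁻¹ = x * g⁻¹ * h := by simp [mul_assoc]
  by_cases hx : x * g⁻¹ ∈ H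
  · have hx' : x * (↑h⁻¹ * g)⁻¹ ∈ H := hxg ▸ mul_mem hx h.2
    rw [indDelta_apply_of_mem _ hx, indDelta_apply_of_mem _ hx', ← Module.End.mul_apply,
      ← map_mul]
    congr 2
    exact Subtype.ext hxg
  · have hx' : x * (↑h⁻¹ * g)⁻¹ ∉ H := hxg ▸ fun hc => hx ((mul_mem_cancel_right h.2).1 hc)
    rw [indDelta_apply_of_notMem _ hx, indDelta_apply_of_notMem _ hx']

lemma indRep_ρ_indDelta (y g : G) (w : W) :
    (indRep H ρ).ρ y (indDelta H ρ g w) = indDelta H ρ (g * y⁻¹) w := by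
  ext x
  show (indDelta H ρ g w).1 (x * y) = _
  have hxy : x * y * g⁻¹ = x * (g * y⁻¹)⁻¹ := by group
  by_cases hx : x * y * g⁻¹ ∈ H
  · rw [indDelta_apply_of_mem _ hx, indDelta_apply_of_mem _ (hxy ▸ hx)]
    simp_rw [hxy]
  · rw [indDelta_apply_of_notMem _ hx, indDelta_apply_of_notMem _ (hxy ▸ hx)]

open scoped Classical in
lemma sum_indDelta [Fintype G] (f : indRep H ρ) :
    ∑ g, indDelta H ρ g (f.1 g) = (Nat.card H : ℂ) • f := by
  ext x
  have hterm : ∀ h : G, (indDelta H ρ (h⁻¹ * x) (f.1 (h⁻¹ * x))).1 x =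
      if h ∈ H then f.1 x else 0 := by
    intro h
    have hx : x * (h⁻¹ * x)⁻¹ = h := by group
    split_ifs with hh
    · rw [indDelta_apply_of_mem _ (by rwa [hx]), ← f.2]
      simp
    · exact indDelta_apply_of_notMem _ (by rwa [hx])
  have hsum : (∑ g, indDelta H ρ g (f.1 g)).1 x = ∑ g, (indDelta H ρ g (f.1 g)).1 x :=
    (congrFun (Submodule.coe_sum (indSpace H ρ) _ _) x).trans (sum_apply _ _ _)
  rw [hsum,
    ← Fintype.sum_equiv ((Equiv.inv G).trans (Equiv.mulRight x)) _ _ fun _ => rfl]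
  simp only [Equiv.trans_apply, Equiv.inv_apply, Equiv.coe_mulRight, hterm]
  show _ = (Nat.card H : ℂ) • f.1 x
  simp [sum_ite, ← Fintype.card_subtype, Nat.card_eq_fintype_card, Nat.cast_smul_eq_nsmul]

lemma indRep_hom_eq_zero_of_indDelta [Finite G] {V : Rep ℂ G} (T : indRep H ρ ⟶ V)
    (hT : ∀ g w, T.hom (indDelta H ρ g w) = 0) : T = 0 := by
  have := Fintype.ofFinite G
  refine Rep.hom_ext (Representation.IntertwiningMap.ext (LinearMap.ext fun f => ?_))
  have hL : ∑ g, T.hom (indDelta H ρ g (f.1 g)) = 0 := sum_eq_zero fun g _ => hT g _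
  rw [← map_sum, sum_indDelta, map_smul] at hL
  exact (smul_eq_zero.mp hL).resolve_left (Nat.cast_ne_zero.mpr Nat.card_pos.ne')

theorem indRep_hom_ofMulAction_eq_zero [Finite G] {K : Subgroup G}
    (hneg : ∀ g : G, ∃ h : H, ρ h = -1 ∧ g⁻¹ * h * g ∈ K)
    (T : indRep H ρ ⟶ Rep.ofMulAction ℂ G (G ⧸ K)) : T = 0 := by
  refine indRep_hom_eq_zero_of_indDelta T fun g w => MonoidAlgebra.ext (Finsupp.ext fun q => ?_)
  induction q using QuotientGroup.induction_on with | _ k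
  obtain ⟨τ, hτ, hK⟩ := hneg (g * k)
  have hv : (Rep.ofMulAction ℂ G (G ⧸ K)).ρ (g⁻¹ * τ * g) (T.hom (indDelta H ρ g w)) =
      -T.hom (indDelta H ρ g w) := by
    have hg : g * (g⁻¹ * τ * g)⁻¹ = (τ : G)⁻¹ * g := by group
    rw [← Rep.hom_comm_apply, indRep_ρ_indDelta, hg, ← Subgroup.coe_inv, indDelta_inv_mul, hτ,
      LinearMap.neg_apply, Module.End.one_apply, indDelta_neg, map_neg]
  have hk : k⁻¹ * (g⁻¹ * τ * g * k) = (g * k)⁻¹ * τ * (g * k) := by group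
  exact Representation.coeff_eq_zero_of_ofMulAction_eq_neg hv (QuotientGroup.eq.mpr (hk ▸ hK)).symm

end IndDelta

lemma swap_mem_youngSubgroup {n : ℕ} (D : YoungDiagram) {a b : Fin n} (hab : blk D a = blk D b) :
    swap a b ∈ youngSubgroup n D := by
  intro i
  rcases eq_or_ne i a with rfl | hia
  · rw [swap_apply_left, hab]
  rcases eq_or_ne i b with rfl | hib
  · rw [swap_apply_right, hab]
  · rw [swap_apply_of_ne_of_ne hia hib]

lemma sgnRep_eq_neg_one {n : ℕ} {H : Subgroup (Perm (Fin n))} {σ : H}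
    (hσ : Perm.sign (σ : Perm (Fin n)) = -1) : sgnRep H σ = -1 := by
  ext
  simp [sgnRep, hσ]

lemma exists_conj_mem_youngSubgroup {n : ℕ} {D E : YoungDiagram} (hD : D.card = n)
    (hE : E.card = n) (h : ¬ domLE E D.transpose) (g : Perm (Fin n)) :
    ∃ τ : youngSubgroup n E, sgnRep _ τ = -1 ∧ g⁻¹ * τ * g ∈ youngSubgroup n D := by
  obtain ⟨a, b, hab, hne⟩ := Function.not_injective_iff.1
    (mt (domLE_transpose_of_injective hD hE g⁻¹) h)
  obtain ⟨hE', hD'⟩ := Prod.ext_iff.1 hab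
  refine ⟨⟨swap a b, swap_mem_youngSubgroup E hE'⟩, sgnRep_eq_neg_one (Perm.sign_swap hne), ?_⟩
  have hconj : g⁻¹ * swap a b * g = swap (g⁻¹ a) (g⁻¹ b) := by
    rw [swap_apply_apply, inv_inv]
  rw [hconj]
  exact swap_mem_youngSubgroup D hD'

/-- For Young diagrams `D`, `E` of size `n`, the intertwining number
`⟨Ind_{S_E}^{S_n}(sgn), Ind_{S_D}^{S_n}(1)⟩` vanishes unless `E ⪯ Dᵗ` in the dominance order. -/
theorem intertwining_zero_of_not_dominated (n : ℕ) (D E : YoungDiagram)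
    (hD : D.card = n) (hE : E.card = n) (h : ¬ domLE E D.transpose) :
    interNum (sgnInduced n E) (youngModule n D) = 0 := by
  have : Subsingleton (sgnInduced n E ⟶ youngModule n D) :=
    subsingleton_of_forall_eq 0 (indRep_hom_ofMulAction_eq_zero
      (exists_conj_mem_youngSubgroup hD hE h))
  exact Module.finrank_zero_of_subsingleton
end PieriGL
end
end

section
/- For 0 ≤ k, k' ≤ n/2, the intertwining number of the Young modules attached to the two-row partitions (n−k, k) and (n−k', k') of n equals min(k, k') + 1. -/
noncomputable section

open CategoryTheory Equiv

namespace PieriGL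

open CategoryTheory Matrix
open scoped TensorProduct

/-- The set of `k`-element subsets of `{1, ..., n}`, acted on by `S_n`. -/
def KSubsets (n k : ℕ) : Type := {s : Finset (Fin n) // s.card = k}

instance (n k : ℕ) : MulAction (Equiv.Perm (Fin n)) (KSubsets n k) where
  smul σ s := ⟨s.1.map σ.toEmbedding, by rw [Finset.card_map]; exact s.2⟩
  one_smul s := by
    apply Subtype.ext
    show Finset.map _ _ = _
    ext x
    simp [Finset.mem_map]
    exact Iff.rfl
  mul_smul σ τ s := by
    apply Subtype.ext
    show s.1.map (σ * τ).toEmbedding = (s.1.map τ.toEmbedding).map σ.toEmbedding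
    rw [Finset.map_map]
    rfl

/-- The Young module attached to the two-row partition `(n-k, k)`, realized as the complex
permutation representation of `S_n` on `k`-element subsets of an `n`-element set. -/
def twoRowModule (n k : ℕ) : Rep ℂ (Equiv.Perm (Fin n)) :=
  Rep.ofMulAction ℂ (Equiv.Perm (Fin n)) (KSubsets n k)

instance (n k : ℕ) : Finite (KSubsets n k) := Subtype.finite

end PieriGL

/-!
A `G`-map `k[X] → k[Y]` between permutation modules is determined by its matrix `X × Y → k`,
and the matrices that occur are exactly the `G`-invariant ones; so `Hom_G(k[X], k[Y])` has a
basis indexed by the `G`-orbits on `X × Y`. Two pairs `(A, B)`, `(A', B')` of `k`- and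
`k'`-subsets of an `n`-set lie in the same `S_n`-orbit iff `|A ∩ B| = |A' ∩ B'|`, and when
`k + k' ≤ n` this intersection size takes exactly the values `0, …, min k k'`.
-/

namespace Finset

variable {α : Type*} [Fintype α] [DecidableEq α]

theorem card_inter_compl (A B : Finset α) : #(A ∩ Bᶜ) = #A - #(A ∩ B) := by
  rw [← sdiff_eq_inter_compl, card_sdiff, inter_comm]

theorem card_compl_inter (A B : Finset α) : #(Aᶜ ∩ B) = #B - #(A ∩ B) := by
  rw [inter_comm, card_inter_compl, inter_comm]

theorem filter_decide_mem_pair_eq (A B : Finset α) (a b : Bool) :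
    ({x | (decide (x ∈ A), decide (x ∈ B)) = (a, b)} : Finset α) =
      (if a then A else Aᶜ) ∩ (if b then B else Bᶜ) := by
  ext x; cases a <;> cases b <;> simp

theorem card_ite_inter_ite_congr {A B A' B' : Finset α} (hA : #A = #A') (hB : #B = #B')
    (hAB : #(A ∩ B) = #(A' ∩ B')) (a b : Bool) :
    #((if a then A else Aᶜ) ∩ (if b then B else Bᶜ)) =
      #((if a then A' else A'ᶜ) ∩ (if b then B' else B'ᶜ)) := by
  cases a <;> cases b <;>
    simp only [Bool.false_eq_true, ↓reduceIte, card_inter_compl, card_compl_inter, card_compl,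
      hA, hB, hAB]

/-- The four regions cut out by `A` and `B` have the same sizes as those cut out by `A'` and `B'`,
so a permutation matching the regions up carries one pair onto the other. -/
theorem exists_perm_map_eq_of_card_inter_eq {A B A' B' : Finset α} (hA : #A = #A')
    (hB : #B = #B') (hAB : #(A ∩ B) = #(A' ∩ B')) :
    ∃ σ : Equiv.Perm α, A.map σ.toEmbedding = A' ∧ B.map σ.toEmbedding = B' := by
  set region : α → Bool × Bool := fun x => (decide (x ∈ A), decide (x ∈ B))
  set region' : α → Bool × Bool := fun x => (decide (x ∈ A'), decide (x ∈ B'))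
  have hfiber : ∀ c, Fintype.card {x // region x = c} = Fintype.card {x // region' x = c} := by
    rintro ⟨a, b⟩
    simp only [Fintype.card_subtype, region, region', filter_decide_mem_pair_eq]
    exact card_ite_inter_ite_congr hA hB hAB a b
  set σ := Equiv.ofFiberEquiv fun c => Fintype.equivOfCardEq (hfiber c)
  have hσ : ∀ x, region' (σ x) = region x := Equiv.ofFiberEquiv_map _
  refine ⟨σ, ?_, ?_⟩ <;> ext y
  · simpa [region, region'] using congrArg Prod.fst (hσ (σ.symm y)).symm
  · simpa [region, region'] using congrArg Prod.snd (hσ (σ.symm y)).symm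

theorem exists_card_eq_card_eq_card_inter_eq {k k' i : ℕ} (hik : i ≤ k) (hik' : i ≤ k')
    (hkk' : k + k' ≤ Fintype.card α + i) :
    ∃ A B : Finset α, #A = k ∧ #B = k' ∧ #(A ∩ B) = i := by
  obtain ⟨C, -, hC⟩ := exists_subset_card_eq (s := (univ : Finset α)) (n := k + k' - i)
    (by rw [card_univ]; omega)
  obtain ⟨A, hAC, hA⟩ := exists_subset_card_eq (s := C) (n := k) (by omega)
  obtain ⟨D, hDA, hD⟩ := exists_subset_card_eq (s := A) (n := i) (by omega)
  have hdisj : Disjoint D (C \ A) := disjoint_of_subset_left hDA disjoint_sdiff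
  refine ⟨A, D ∪ (C \ A), hA, ?_, ?_⟩
  · rw [card_union_of_disjoint hdisj, card_sdiff_of_subset hAC]
    omega
  · rw [inter_union_distrib_left, inter_eq_right.mpr hDA, inter_sdiff_self, union_empty, hD]

end Finset

theorem MonoidAlgebra.basis_constr_single {k V X : Type*} [CommRing k] [AddCommGroup V]
    [Module k V] (f : X → V) (x : X) :
    (MonoidAlgebra.basis X k).constr k f (MonoidAlgebra.single x 1) = f x :=
  (MonoidAlgebra.basis X k).constr_basis k f x

namespace Representation

open MonoidAlgebra

section Monoid

variable {k G V : Type*} [CommRing k] [Monoid G] [AddCommGroup V] [Module k V]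

def equivariantMaps (σ : Representation k G V) (X : Type*) [MulAction G X] :
    Submodule k (X → V) where
  carrier := {f | ∀ (g : G) (x : X), f (g • x) = σ g (f x)}
  add_mem' hf hf' g x := by simp [hf g x, hf' g x]
  zero_mem' g x := by simp
  smul_mem' c f hf g x := by simp [hf g x]

def ofMulActionIntertwiningMapEquiv (σ : Representation k G V) (X : Type*) [MulAction G X] :
    (ofMulAction k G X).IntertwiningMap σ ≃ₗ[k] equivariantMaps σ X where
  toFun T := ⟨fun x => T (single x 1), fun g x => by
    simp only [← ofMulAction_single, IntertwiningMap.isIntertwining]⟩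
  map_add' _ _ := rfl
  map_smul' _ _ := rfl
  invFun f := ⟨(basis X k).constr k f, fun g => by
    refine (basis X k).ext fun x => ?_
    simp [basis_constr_single, f.2 g x]⟩
  left_inv T := by
    refine IntertwiningMap.ext ((basis X k).ext fun x => ?_)
    simp [basis_constr_single]
  right_inv f := by ext x; simp [basis_constr_single]

end Monoid

section Group

variable {k G : Type*} [CommRing k] [Group G]

variable (k G) in
def invariantFunctions (Z : Type*) [MulAction G Z] : Submodule k (Z → k) where
  carrier := {f | ∀ (g : G) (z : Z), f (g • z) = f z}
  add_mem' hf hf' g z := by simp [hf g z, hf' g z]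
  zero_mem' g z := rfl
  smul_mem' c f hf g z := by simp [hf g z]

def equivariantMapsEquivInvariantFunctions (X Y : Type*) [MulAction G X] [MulAction G Y]
    [Finite Y] : equivariantMaps (ofMulAction k G Y) X ≃ₗ[k] invariantFunctions k G (X × Y) where
  toFun f := ⟨fun p => (f.1 p.1).coeff p.2, fun g p => by simp [f.2 g p.1]⟩
  map_add' _ _ := rfl
  map_smul' _ _ := rfl
  invFun F := ⟨fun x => ofCoeff (Finsupp.equivFunOnFinite.symm fun y => F.1 (x, y)), fun g x => by
    ext y
    simpa using F.2 g (x, g⁻¹ • y)⟩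
  left_inv f := by ext x y; simp
  right_inv F := by ext p; simp

variable (k G) in
def invariantFunctionsEquivFunOnQuotient (Z : Type*) [MulAction G Z] :
    invariantFunctions k G Z ≃ₗ[k] (MulAction.orbitRel.Quotient G Z → k) where
  toFun f := Quotient.lift f.1 (by rintro _ z ⟨g, rfl⟩; exact f.2 g z)
  map_add' f f' := by ext ⟨z⟩; rfl
  map_smul' c f := by ext ⟨z⟩; rfl
  invFun F := ⟨fun z => F ⟦z⟧, fun g z => congrArg F (Quotient.sound ⟨g, rfl⟩)⟩
  left_inv f := rfl
  right_inv F := by ext ⟨z⟩; rfl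

end Group

end Representation

universe u in
theorem Rep.finrank_ofMulAction_hom_eq_card_orbitRel_quotient {k G : Type*} [CommRing k]
    [Nontrivial k] [Group G] (X Y : Type u) [MulAction G X] [MulAction G Y] [Finite X] [Finite Y] :
    Module.finrank k (Rep.ofMulAction k G X ⟶ Rep.ofMulAction k G Y) =
      Nat.card (MulAction.orbitRel.Quotient G (X × Y)) := by
  have e := Rep.homLinearEquiv (Rep.ofMulAction k G X) (Rep.ofMulAction k G Y) ≪≫ₗ
    Representation.ofMulActionIntertwiningMapEquiv _ X ≪≫ₗ
    Representation.equivariantMapsEquivInvariantFunctions X Y ≪≫ₗ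
    Representation.invariantFunctionsEquivFunOnQuotient k G (X × Y)
  have := Fintype.ofFinite (MulAction.orbitRel.Quotient G (X × Y))
  rw [e.finrank_eq, Module.finrank_fintype_fun_eq_card, Nat.card_eq_fintype_card]

open Finset

namespace PieriGL

variable {n k k' : ℕ}

theorem card_inter_smul (σ : Perm (Fin n)) (p : KSubsets n k × KSubsets n k') :
    #((σ • p).1.1 ∩ (σ • p).2.1) = #(p.1.1 ∩ p.2.1) := by
  change #(p.1.1.map σ.toEmbedding ∩ p.2.1.map σ.toEmbedding) = _
  rw [← map_inter, card_map]

variable (n k k') in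
def orbitInterCard :
    MulAction.orbitRel.Quotient (Perm (Fin n)) (KSubsets n k × KSubsets n k') → ℕ :=
  Quotient.lift (s := MulAction.orbitRel (Perm (Fin n)) (KSubsets n k × KSubsets n k'))
    (fun p => #(p.1.1 ∩ p.2.1))
    (by rintro _ p ⟨σ, rfl⟩; exact card_inter_smul σ p)

theorem orbitInterCard_injective : Function.Injective (orbitInterCard n k k') := by
  rintro ⟨p⟩ ⟨q⟩ h
  obtain ⟨σ, hσ₁, hσ₂⟩ := exists_perm_map_eq_of_card_inter_eq (p.1.2.trans q.1.2.symm)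
    (p.2.2.trans q.2.2.symm) (h : #(p.1.1 ∩ p.2.1) = #(q.1.1 ∩ q.2.1))
  have hσ : σ • p = q := Prod.ext (Subtype.ext hσ₁) (Subtype.ext hσ₂)
  exact (Quotient.sound (s := MulAction.orbitRel _ _) ⟨σ, hσ⟩).symm

theorem range_orbitInterCard (h : k + k' ≤ n) :
    Set.range (orbitInterCard n k k') = Set.Iic (min k k') := by
  ext i
  constructor
  · rintro ⟨⟨p⟩, rfl⟩
    exact le_min (p.1.2 ▸ card_le_card inter_subset_left) (p.2.2 ▸ card_le_card inter_subset_right)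
  · intro hi
    obtain ⟨A, B, hA, hB, hAB⟩ := exists_card_eq_card_eq_card_inter_eq (α := Fin n)
      (le_min_iff.mp hi).1 (le_min_iff.mp hi).2 (by rw [Fintype.card_fin]; omega)
    exact ⟨⟦(⟨A, hA⟩, ⟨B, hB⟩)⟧, hAB⟩

theorem card_orbitRel_quotient_pairs (h : k + k' ≤ n) :
    Nat.card (MulAction.orbitRel.Quotient (Perm (Fin n)) (KSubsets n k × KSubsets n k')) =
      min k k' + 1 := by
  rw [← Nat.card_range_of_injective orbitInterCard_injective, range_orbitInterCard h]
  simp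

/-- For `0 ≤ k, k' ≤ n/2`, the intertwining number of the Young modules of the
two-row partitions `(n-k, k)` and `(n-k', k')` is `min k k' + 1`. -/
theorem twoRow_intertwining (n k k' : ℕ) (hk : 2 * k ≤ n) (hk' : 2 * k' ≤ n) :
    interNum (twoRowModule n k) (twoRowModule n k') = min k k' + 1 :=
  (Rep.finrank_ofMulAction_hom_eq_card_orbitRel_quotient _ _).trans
    (card_orbitRel_quotient_pairs (by omega))
end PieriGL
end
end

section
/- For 0 ≤ k with k + 1 ≤ n/2, the Young module of S_n attached to the partition (n−k, k) is isomorphic to a subrepresentation of the Young module attached to (n−k−1, k+1). -/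
noncomputable section

open CategoryTheory Equiv

namespace PieriGL

open CategoryTheory Matrix
open scoped TensorProduct

/-!
The map sending a `k`-subset to the sum of the `(k+1)`-subsets containing it is
`S_n`-equivariant, and its matrix `W_k` (the inclusion matrix) satisfies
`W_kᵀ W_k = W_{k-1} W_{k-1}ᵀ + (n - 2k) • 1`: at `(s, s')` both sides count the common
`(k+1)`-supersets, resp. the common `(k-1)`-subsets, of `s` and `s'`, and these numbers agree
off the diagonal. For `2k < n` the right-hand side is positive definite, so `W_k` is injective.
-/

section InvariantMatrix

variable {k G X Y : Type} [CommRing k] [Group G] [MulAction G X] [MulAction G Y]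
  [Fintype X] [Finite Y]

def invariantMatrixHom (W : Matrix Y X k) (hW : ∀ (g : G) y x, W (g • y) (g • x) = W y x) :
    Rep.ofMulAction k G X ⟶ Rep.ofMulAction k G Y :=
  Rep.ofHom
    { toLinearMap := (MonoidAlgebra.coeffLinearEquiv k).symm.toLinearMap ∘ₗ
        (Finsupp.linearEquivFunOnFinite k k Y).symm.toLinearMap ∘ₗ W.mulVecLin ∘ₗ
        (Finsupp.linearEquivFunOnFinite k k X).toLinearMap ∘ₗ
        (MonoidAlgebra.coeffLinearEquiv k).toLinearMap
      isIntertwining' := fun g => by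
        ext v y
        classical
        simp [Representation.coeff_ofMulAction, Finsupp.linearEquivFunOnFinite_single,
          ← hW g⁻¹ y] }

theorem mono_invariantMatrixHom (W : Matrix Y X k)
    (hW : ∀ (g : G) y x, W (g • y) (g • x) = W y x) (hinj : Function.Injective W.mulVec) :
    Mono (invariantMatrixHom W hW) := by
  rw [Rep.mono_iff_injective]
  simpa [invariantMatrixHom, Matrix.coe_mulVecLin] using hinj

end InvariantMatrix

theorem mulVec_injective_of_posDef_conjTranspose_mul_self {K m l : Type*} [Field K]
    [PartialOrder K] [StarRing K] [Fintype m] [Fintype l] [DecidableEq l] {A : Matrix m l K}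
    (hA : (Aᴴ * A).PosDef) : Function.Injective A.mulVec := fun x y hxy =>
  Matrix.mulVec_injective_iff_isUnit.2 hA.isUnit <| by
    rw [← Matrix.mulVec_mulVec, ← Matrix.mulVec_mulVec, hxy]

instance (n k : ℕ) : Fintype (KSubsets n k) := by unfold KSubsets; infer_instance
instance (n k : ℕ) : DecidableEq (KSubsets n k) := by unfold KSubsets; infer_instance

namespace KSubsets

open Finset
open scoped ComplexOrder

variable {n : ℕ}

instance : Subsingleton (KSubsets n 0) :=
  ⟨fun s s' => Subtype.ext ((card_eq_zero.1 s.2).trans (card_eq_zero.1 s'.2).symm)⟩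

theorem coe_smul {k : ℕ} (σ : Equiv.Perm (Fin n)) (s : KSubsets n k) :
    (σ • s).1 = s.1.map σ.toEmbedding := rfl

theorem card_filter_eq_card_filter_powersetCard (K : ℕ) (p : Finset (Fin n) → Prop)
    [DecidablePred p] :
    #(univ.filter fun t : KSubsets n K => p t.1) = #((univ.powersetCard K).filter p) := by
  refine card_bij' (fun t _ => t.1) (fun u hu => ⟨u, (mem_powersetCard.1 (mem_filter.1 hu).1).2⟩)
    ?_ ?_ (fun _ _ => rfl) (fun _ _ => rfl)
  · intro t ht
    exact mem_filter.2 ⟨mem_powersetCard.2 ⟨subset_univ _, t.2⟩, (mem_filter.1 ht).2⟩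
  · intro u hu
    exact mem_filter.2 ⟨mem_univ _, (mem_filter.1 hu).2⟩

theorem card_filter_superset {K : ℕ} (A : Finset (Fin n)) (hA : #A ≤ K) :
    #(univ.filter fun t : KSubsets n K => A ⊆ t.1) = (n - #A).choose (K - #A) := by
  refine (card_filter_eq_card_filter_powersetCard K (A ⊆ ·)).trans ?_
  rw [card_filter_powersetCard_subset _ _ _ (subset_univ A) hA, card_univ, Fintype.card_fin]

theorem filter_superset_eq_empty {K : ℕ} (A : Finset (Fin n)) (hA : K < #A) :
    univ.filter (fun t : KSubsets n K => A ⊆ t.1) = ∅ :=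
  filter_eq_empty_iff.2 fun t _ hAt => by
    have := card_le_card hAt
    have := t.2
    omega

theorem card_filter_subset (m : ℕ) (B : Finset (Fin n)) :
    #(univ.filter fun r : KSubsets n m => r.1 ⊆ B) = (#B).choose m := by
  refine (card_filter_eq_card_filter_powersetCard m (· ⊆ B)).trans ?_
  rw [← card_powersetCard]
  congr 1
  ext u
  simp only [mem_filter, mem_powersetCard, subset_univ, true_and]
  tauto

-- The diagonal terms `2 * (m + 1)` and `n` stand on both sides so that no subtraction occurs.
theorem card_superset_union_add_eq {m : ℕ} (s s' : KSubsets n (m + 1)) :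
    #(univ.filter fun t : KSubsets n (m + 2) => s.1 ∪ s'.1 ⊆ t.1)
        + (if s = s' then 2 * (m + 1) else 0)
      = #(univ.filter fun r : KSubsets n m => r.1 ⊆ s.1 ∩ s'.1) + (if s = s' then n else 0) := by
  have hs : #s.1 = m + 1 := s.2
  have hs' : #s'.1 = m + 1 := s'.2
  by_cases hss : s = s'
  · subst hss
    have hn : m + 1 ≤ n := hs ▸ (card_le_univ s.1).trans_eq (Fintype.card_fin n)
    rw [union_self, inter_self, card_filter_superset _ (by omega), card_filter_subset, hs,
      if_pos rfl, if_pos rfl, show m + 2 - (m + 1) = 1 by omega, Nat.choose_one_right,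
      Nat.choose_succ_self_right]
    omega
  · rw [if_neg hss, if_neg hss]
    have hsum := card_union_add_card_inter s.1 s'.1
    have hinter : #(s.1 ∩ s'.1) < #s.1 := by
      refine card_lt_card (ssubset_of_subset_of_ne inter_subset_left fun h => hss ?_)
      exact Subtype.ext (eq_of_subset_of_card_le (inter_eq_left.1 h) (by omega))
    rcases (show #(s.1 ∩ s'.1) ≤ m by omega).eq_or_lt with hm | hm
    · rw [card_filter_superset _ (by omega), card_filter_subset, hm,
        show m + 2 - #(s.1 ∪ s'.1) = 0 by omega, Nat.choose_zero_right, Nat.choose_self]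
    · rw [filter_superset_eq_empty _ (by omega), card_filter_subset,
        Nat.choose_eq_zero_of_lt hm, card_empty]

def inclusionMatrix (R : Type*) [Zero R] [One R] (n k l : ℕ) :
    Matrix (KSubsets n l) (KSubsets n k) R :=
  Matrix.of fun t s => if s.1 ⊆ t.1 then 1 else 0

@[simp]
theorem inclusionMatrix_apply (R : Type*) [Zero R] [One R] {k l : ℕ} (t : KSubsets n l)
    (s : KSubsets n k) : inclusionMatrix R n k l t s = if s.1 ⊆ t.1 then 1 else 0 := rfl

theorem inclusionMatrix_smul_smul (R : Type*) [Zero R] [One R] {k l : ℕ}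
    (σ : Equiv.Perm (Fin n)) (t : KSubsets n l) (s : KSubsets n k) :
    inclusionMatrix R n k l (σ • t) (σ • s) = inclusionMatrix R n k l t s := by
  simp only [inclusionMatrix_apply, coe_smul, map_subset_map]

theorem inclusionMatrix_conjTranspose (R : Type*) [NonAssocSemiring R] [StarRing R] (k l : ℕ) :
    (inclusionMatrix R n k l)ᴴ = (inclusionMatrix R n k l)ᵀ := by
  ext s t
  simp only [Matrix.conjTranspose_apply, Matrix.transpose_apply, inclusionMatrix_apply,
    apply_ite star, star_one, star_zero]

theorem inclusionMatrix_transpose_mul_self (R : Type*) [CommRing R] (m : ℕ) :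
    (inclusionMatrix R n (m + 1) (m + 2))ᵀ * inclusionMatrix R n (m + 1) (m + 2)
      = inclusionMatrix R n m (m + 1) * (inclusionMatrix R n m (m + 1))ᵀ
        + ((n : R) - 2 * (m + 1)) • 1 := by
  ext s s'
  have h := congrArg (Nat.cast (R := R)) (card_superset_union_add_eq s s')
  push_cast [apply_ite (Nat.cast (R := R))] at h
  simp only [Matrix.add_apply, Matrix.mul_apply, Matrix.transpose_apply, inclusionMatrix_apply,
    Matrix.smul_apply, Matrix.one_apply, ite_zero_mul_ite_zero, mul_one, ← union_subset_iff,
    ← subset_inter_iff, sum_boole, smul_eq_mul]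
  split_ifs at h ⊢ <;> linear_combination h

theorem inclusionMatrix_zero_mulVec_injective (R : Type*) [NonAssocSemiring R] (hn : 0 < n) :
    Function.Injective (inclusionMatrix R n 0 1).mulVec := by
  intro v w hvw
  funext s
  obtain ⟨t, hst⟩ : ∃ t : KSubsets n 1, s.1 ⊆ t.1 :=
    ⟨⟨{⟨0, hn⟩}, card_singleton _⟩, (card_eq_zero.1 s.2).symm ▸ empty_subset _⟩
  simpa [Matrix.mulVec, dotProduct, Fintype.sum_subsingleton _ s, hst] using congrFun hvw t

theorem inclusionMatrix_mulVec_injective (𝕜 : Type*) [RCLike 𝕜] {k : ℕ} (h : 2 * k < n) :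
    Function.Injective (inclusionMatrix 𝕜 n k (k + 1)).mulVec := by
  cases k with
  | zero => exact inclusionMatrix_zero_mulVec_injective 𝕜 (by omega)
  | succ m =>
    refine mulVec_injective_of_posDef_conjTranspose_mul_self ?_
    rw [inclusionMatrix_conjTranspose, inclusionMatrix_transpose_mul_self,
      ← inclusionMatrix_conjTranspose]
    have hc : (0 : 𝕜) < n - 2 * (m + 1) := by
      rw [← Nat.cast_ofNat, ← Nat.cast_succ, ← Nat.cast_mul, ← Nat.cast_sub (by omega)]
      exact_mod_cast (by omega : 0 < n - 2 * (m + 1))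
    exact .posSemidef_add (Matrix.posSemidef_self_mul_conjTranspose _) (Matrix.PosDef.one.smul hc)

end KSubsets

/-- For `k + 1 ≤ n/2`, the Young module of `(n-k, k)` is isomorphic to a
subrepresentation of the Young module of `(n-k-1, k+1)`. -/
theorem twoRow_sub (n k : ℕ) (h : 2 * (k + 1) ≤ n) :
    ∃ f : twoRowModule n k ⟶ twoRowModule n (k + 1), Mono f :=
  ⟨invariantMatrixHom _ (KSubsets.inclusionMatrix_smul_smul ℂ),
    mono_invariantMatrixHom _ _ (KSubsets.inclusionMatrix_mulVec_injective ℂ (by omega))⟩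
end PieriGL
end
end
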